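/- In the partic algebra PP_N, for a normal-form monomial m = a_{N-1}^{d_{N-1}} ⋯ a_2^{d_2} a_1^{k_1} ⋯ a_{N-1}^{k_{N-1}} (with the normal-form inequalities), if d_i = d_{i-1} + k_{i-1}, then a_i · m equals the normal-form monomial obtained from m by replacing k_i with k_i + 1; if d_i < d_{i-1} + k_{i-1}, then a_i · m equals the normal-form monomial obtained from m by replacing d_i with d_i + 1. In both cases the resulting monomial again satisfies the normal-form inequalities. -/

import Mathlib

/-!
Write `x = a_i`, `y = a_{i-1}`, `u = a_{i+1}`. The monomial factors as
`H · u^{d_{i+1}} · x^{d_i} · W · x^{e_i} · R`, where `H` commutes with `x` and `W` lies in the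
submonoid generated by `a_1, …, a_{i-1}`. For such `W` one has `u x W x = x W u x`, proved by
induction on `i` from the plactic and partic relations; together with `x u x = u x x` it lets `x`
pass through `u^p` whenever `p ≤ d_i + e_i`, so `a_i · m` always raises `d_i` by one. When
`d_i = d_{i-1} + e_{i-1}`, write `W = y^{d_{i-1}} W' y^{e_{i-1}}` with `W'` commuting with `x`;
since `x` commutes with `x y` and `(x y)^n = x^n y^n`, we get `x^{d_i + 1} W = x^{d_i} W x`,
which turns the raised `d_i` into a raised `e_i`.
-/

inductive ParticRel (K : Type*) [CommRing K] (N : ℕ) :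
    FreeAlgebra K (Fin (N - 1)) → FreeAlgebra K (Fin (N - 1)) → Prop
  | plac1 : ∀ i j : Fin (N - 1), (i : ℕ) = (j : ℕ) + 1 →
      ParticRel K N (FreeAlgebra.ι K i * FreeAlgebra.ι K j * FreeAlgebra.ι K i)
        (FreeAlgebra.ι K i * FreeAlgebra.ι K i * FreeAlgebra.ι K j)
  | plac2 : ∀ i j : Fin (N - 1), (j : ℕ) = (i : ℕ) + 1 →
      ParticRel K N (FreeAlgebra.ι K i * FreeAlgebra.ι K j * FreeAlgebra.ι K i)
        (FreeAlgebra.ι K j * FreeAlgebra.ι K i * FreeAlgebra.ι K i)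
  | comm : ∀ i j : Fin (N - 1), (i : ℕ) + 1 < (j : ℕ) →
      ParticRel K N (FreeAlgebra.ι K i * FreeAlgebra.ι K j)
        (FreeAlgebra.ι K j * FreeAlgebra.ι K i)
  | partic : ∀ lo mid hi : Fin (N - 1), (mid : ℕ) = (lo : ℕ) + 1 → (hi : ℕ) = (mid : ℕ) + 1 →
      ParticRel K N
        (FreeAlgebra.ι K mid * FreeAlgebra.ι K lo * FreeAlgebra.ι K hi * FreeAlgebra.ι K mid)
        (FreeAlgebra.ι K hi * FreeAlgebra.ι K mid * FreeAlgebra.ι K lo * FreeAlgebra.ι K mid)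

/-- The partic algebra `PP_N`, with generators `a_1, …, a_{N-1}`. -/
abbrev ParticAlgebra (K : Type*) [CommRing K] (N : ℕ) := RingQuot (ParticRel K N)

/-- The generator `a_i` of the partic algebra, for `1 ≤ i ≤ N-1` (junk value `0`
outside that range). -/
noncomputable def ppa (K : Type*) [CommRing K] (N : ℕ) (i : ℕ) : ParticAlgebra K N :=
  if h : 1 ≤ i ∧ i ≤ N - 1 then
    RingQuot.mkAlgHom K (ParticRel K N) (FreeAlgebra.ι K ⟨i - 1, by omega⟩) else 0

/-- The normal-form monomial
`a_{N-1}^{d_{N-1}} ⋯ a_2^{d_2} · a_1^{e_1} a_2^{e_2} ⋯ a_{N-1}^{e_{N-1}}`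
in the partic algebra. -/
noncomputable def nfMon (K : Type*) [CommRing K] (N : ℕ) (d e : ℕ → ℕ) : ParticAlgebra K N :=
  ((List.range (N - 2)).map fun t => ppa K N (N - 1 - t) ^ d (N - 1 - t)).prod *
    ((List.range (N - 1)).map fun t => ppa K N (t + 1) ^ e (t + 1)).prod

section PlacticPair

variable {M : Type*} [Monoid M] {x y u m w : M}

theorem mul_pow_eq_pow_mul_pow (hyxy : y * x * y = x * y * y) (k : ℕ) :
    (x * y) ^ k = x ^ k * y ^ k := by
  have hy : ∀ k : ℕ, y ^ k * (x * y) = x * y ^ (k + 1) := by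
    intro k
    induction k with
    | zero => simp
    | succ k ih =>
      calc y ^ (k + 1) * (x * y) = y * (y ^ k * (x * y)) := by rw [pow_succ', mul_assoc]
        _ = y * x * y * y ^ k := by rw [ih, pow_succ']; simp only [mul_assoc]
        _ = x * y ^ (k + 1 + 1) := by
          rw [hyxy, pow_succ' y (k + 1), pow_succ']; simp only [mul_assoc]
  induction k with
  | zero => simp
  | succ k ih => rw [pow_succ, ih, mul_assoc, hy, ← mul_assoc, ← pow_succ]

theorem commute_self_mul_of_mul_mul_eq (hxyx : x * y * x = x * x * y) :
    Commute x (x * y) := by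
  show x * (x * y) = x * y * x
  rw [hxyx, mul_assoc]

theorem pow_succ_mul_pow (hxyx : x * y * x = x * x * y) (hyxy : y * x * y = x * y * y) (k : ℕ) :
    x ^ (k + 1) * y ^ k = x ^ k * y ^ k * x := by
  rw [pow_succ', mul_assoc, ← mul_pow_eq_pow_mul_pow hyxy,
    ((commute_self_mul_of_mul_mul_eq hxyx).pow_right k).eq, mul_pow_eq_pow_mul_pow hyxy]

theorem pow_add_succ_mul_pow_mul_mul_pow (hxyx : x * y * x = x * x * y)
    (hyxy : y * x * y = x * y * y) (hm : Commute x m) (a b : ℕ) :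
    x ^ (a + b + 1) * y ^ a * m * y ^ b = x ^ (a + b) * y ^ a * m * y ^ b * x := by
  have hc : Commute x ((x * y) ^ a * m) :=
    ((commute_self_mul_of_mul_mul_eq hxyx).pow_right a).mul_right hm
  calc x ^ (a + b + 1) * y ^ a * m * y ^ b = x ^ (b + 1) * ((x * y) ^ a * m) * y ^ b := by
        rw [mul_pow_eq_pow_mul_pow hyxy, show a + b + 1 = b + 1 + a by omega, pow_add]
        simp only [mul_assoc]
    _ = (x * y) ^ a * m * (x ^ (b + 1) * y ^ b) := by rw [(hc.pow_left (b + 1)).eq, mul_assoc]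
    _ = x ^ b * ((x * y) ^ a * m) * y ^ b * x := by
        rw [pow_succ_mul_pow hxyx hyxy, ← mul_assoc, ← mul_assoc, ← (hc.pow_left b).eq]
    _ = x ^ (a + b) * y ^ a * m * y ^ b * x := by
        rw [mul_pow_eq_pow_mul_pow hyxy, add_comm a b, pow_add]; simp only [mul_assoc]

theorem mul_pow_mul_pow_mul_mul_pow (hxux : x * u * x = u * x * x) (hw : Commute u w)
    (hhop : x * u * w * x = u * x * w * x) {p d e : ℕ} (hp : p ≤ d + e) :
    x * u ^ p * x ^ d * w * x ^ e = u ^ p * x ^ (d + 1) * w * x ^ e := by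
  induction p generalizing w d e with
  | zero => simp [pow_succ']
  | succ p ih =>
    rcases d with _ | d
    · obtain ⟨e, rfl⟩ : ∃ e', e = e' + 1 := ⟨e - 1, by omega⟩
      have hpow : x * u ^ p * x ^ e = u ^ p * x ^ (e + 1) := by
        simpa using ih (Commute.one_right u) (by simpa using hxux) (d := e) (e := 0) (by omega)
      have hw' : u ^ p * w = w * u ^ p := (hw.pow_left p).eq
      calc x * u ^ (p + 1) * x ^ 0 * w * x ^ (e + 1)
          = x * u * w * (u ^ p * x ^ (e + 1)) := by
            rw [pow_succ', pow_zero, mul_one, mul_assoc x, mul_assoc u, hw']; simp only [mul_assoc]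
        _ = x * u * w * x * (u ^ p * x ^ e) := by rw [← hpow]; simp only [mul_assoc]
        _ = u * x * w * (x * u ^ p * x ^ e) := by rw [hhop]; simp only [mul_assoc]
        _ = u * (x * (u ^ p * w) * x ^ (e + 1)) := by rw [hpow, hw']; simp only [mul_assoc]
        _ = u * (u ^ p * x ^ (0 + 1) * w * x ^ (e + 1)) := by
            rw [← ih hw hhop (by omega)]; simp only [pow_zero, mul_one, mul_assoc]
        _ = u ^ (p + 1) * x ^ (0 + 1) * w * x ^ (e + 1) := by
            rw [pow_succ' u]; simp only [mul_assoc]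
    · have hd := ih hw hhop (d := d) (e := e) (by omega)
      calc x * u ^ (p + 1) * x ^ (d + 1) * w * x ^ e
          = x * u * (u ^ p * x ^ (d + 1) * w * x ^ e) := by rw [pow_succ']; simp only [mul_assoc]
        _ = x * u * x * (u ^ p * x ^ d * w * x ^ e) := by rw [← hd]; simp only [mul_assoc]
        _ = u * (x * (x * u ^ p * x ^ d * w * x ^ e)) := by rw [hxux]; simp only [mul_assoc]
        _ = u * (x * u ^ p * x ^ (d + 1) * w * x ^ e) := by rw [hd]; simp only [mul_assoc]
        _ = u ^ (p + 1) * x ^ (d + 1 + 1) * w * x ^ e := by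
            rw [ih hw hhop (by omega), pow_succ' u]; simp only [mul_assoc]

end PlacticPair

theorem range'_eq_append_cons {s n i : ℕ} (hs : s ≤ i) (hi : i < s + n) :
    List.range' s n = List.range' s (i - s) ++ i :: List.range' (i + 1) (s + n - 1 - i) := by
  obtain ⟨m, rfl⟩ : ∃ m, n = i - s + (m + 1) := ⟨n - (i - s) - 1, by omega⟩
  rw [← List.range'_append_1, List.range'_succ, show s + (i - s) = i by omega,
    show s + (i - s + (m + 1)) - 1 - i = m by omega]

section Partic

variable {K : Type*} [CommRing K] {N : ℕ}

theorem ppa_eq_mkAlgHom {i : ℕ} (h1 : 1 ≤ i) (h2 : i ≤ N - 1) :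
    ppa K N i = RingQuot.mkAlgHom K (ParticRel K N) (FreeAlgebra.ι K ⟨i - 1, by omega⟩) := by
  rw [ppa, dif_pos ⟨h1, h2⟩]

theorem ppa_succ_mul_ppa_mul_ppa_succ {j : ℕ} (hj : 1 ≤ j) (hjN : j + 1 ≤ N - 1) :
    ppa K N (j + 1) * ppa K N j * ppa K N (j + 1) =
      ppa K N (j + 1) * ppa K N (j + 1) * ppa K N j := by
  rw [ppa_eq_mkAlgHom (i := j) hj (by omega), ppa_eq_mkAlgHom (i := j + 1) (by omega) hjN]
  simp only [← map_mul]
  exact RingQuot.mkAlgHom_rel K (ParticRel.plac1 _ _ (by simp; omega))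

theorem ppa_mul_ppa_succ_mul_ppa {j : ℕ} (hj : 1 ≤ j) (hjN : j + 1 ≤ N - 1) :
    ppa K N j * ppa K N (j + 1) * ppa K N j = ppa K N (j + 1) * ppa K N j * ppa K N j := by
  rw [ppa_eq_mkAlgHom (i := j) hj (by omega), ppa_eq_mkAlgHom (i := j + 1) (by omega) hjN]
  simp only [← map_mul]
  exact RingQuot.mkAlgHom_rel K (ParticRel.plac2 _ _ (by simp; omega))

theorem ppa_succ_mul_ppa_mul_ppa_add_two_mul_ppa_succ {j : ℕ} (hj : 1 ≤ j)
    (hjN : j + 2 ≤ N - 1) :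
    ppa K N (j + 1) * ppa K N j * ppa K N (j + 2) * ppa K N (j + 1) =
      ppa K N (j + 2) * ppa K N (j + 1) * ppa K N j * ppa K N (j + 1) := by
  rw [ppa_eq_mkAlgHom (i := j) hj (by omega), ppa_eq_mkAlgHom (i := j + 1) (by omega) (by omega),
    ppa_eq_mkAlgHom (i := j + 2) (by omega) hjN]
  simp only [← map_mul]
  exact RingQuot.mkAlgHom_rel K (ParticRel.partic _ _ _ (by simp; omega) (by simp))

theorem commute_ppa_of_add_two_le {i j : ℕ} (h : i + 2 ≤ j) :
    Commute (ppa K N i) (ppa K N j) := by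
  by_cases hi : 1 ≤ i ∧ i ≤ N - 1
  · by_cases hj : 1 ≤ j ∧ j ≤ N - 1
    · rw [Commute, SemiconjBy, ppa_eq_mkAlgHom hi.1 hi.2, ppa_eq_mkAlgHom hj.1 hj.2]
      simp only [← map_mul]
      exact RingQuot.mkAlgHom_rel K (ParticRel.comm _ _ (by simp; omega))
    · simp [ppa, hj]
  · simp [ppa, hi]

variable (K N) in
def lowerSubmonoid (j : ℕ) : Submonoid (ParticAlgebra K N) :=
  Submonoid.closure (ppa K N '' Set.Ico 1 j)

theorem ppa_mem_lowerSubmonoid {t j : ℕ} (ht : 1 ≤ t) (htj : t < j) :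
    ppa K N t ∈ lowerSubmonoid K N j :=
  Submonoid.subset_closure ⟨t, ⟨ht, htj⟩, rfl⟩

theorem lowerSubmonoid_one : lowerSubmonoid K N 1 = ⊥ := by
  simp [lowerSubmonoid]

theorem commute_ppa_of_mem_lowerSubmonoid {i j : ℕ} {w : ParticAlgebra K N} (hij : j + 1 ≤ i)
    (hw : w ∈ lowerSubmonoid K N j) : Commute (ppa K N i) w := by
  induction hw using Submonoid.closure_induction with
  | mem g hg =>
    obtain ⟨t, ⟨-, ht⟩, rfl⟩ := hg
    exact (commute_ppa_of_add_two_le (by omega)).symm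
  | one => exact Commute.one_right _
  | mul _ _ _ _ h₁ h₂ => exact h₁.mul_right h₂

-- The induction carries a left factor `v`, which absorbs the generators `a_t` with `t < j`.
theorem ppa_succ_mul_ppa_mul_mul_ppa_of_forall {j : ℕ}
    (hP : ∀ q ∈ lowerSubmonoid K N j, ppa K N (j + 1) * ppa K N j * q * ppa K N j =
      ppa K N j * q * ppa K N (j + 1) * ppa K N j)
    {w : ParticAlgebra K N} (hw : w ∈ lowerSubmonoid K N (j + 1)) :
    ppa K N (j + 1) * ppa K N j * w * ppa K N j = ppa K N j * w * ppa K N (j + 1) * ppa K N j := by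
  suffices ∀ v ∈ lowerSubmonoid K N j, ppa K N (j + 1) * ppa K N j * (v * w) * ppa K N j =
      ppa K N j * (v * w) * ppa K N (j + 1) * ppa K N j by
    simpa using this 1 (one_mem _)
  induction hw using Submonoid.closure_induction_left with
  | one => simpa using hP
  | mul_left g hg w hw ih =>
    intro v hv
    obtain ⟨t, ⟨ht1, ht⟩, rfl⟩ := hg
    rcases Nat.lt_or_ge t j with htj | htj
    · simpa only [mul_assoc] using ih _ (mul_mem hv (ppa_mem_lowerSubmonoid ht1 htj))
    · obtain rfl : t = j := by omega
      calc ppa K N (t + 1) * ppa K N t * (v * (ppa K N t * w)) * ppa K N t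
          = ppa K N (t + 1) * ppa K N t * v * ppa K N t * w * ppa K N t := by
            simp only [mul_assoc]
        _ = ppa K N t * v * (ppa K N (t + 1) * ppa K N t * (1 * w) * ppa K N t) := by
            rw [hP v hv]; simp only [one_mul, mul_assoc]
        _ = ppa K N t * (v * (ppa K N t * w)) * ppa K N (t + 1) * ppa K N t := by
            rw [ih 1 (one_mem _)]; simp only [one_mul, mul_assoc]

theorem ppa_succ_mul_mul_ppa_of_forall {j : ℕ}
    (hP : ∀ q ∈ lowerSubmonoid K N j, ppa K N (j + 1) * ppa K N j * q * ppa K N j =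
      ppa K N j * q * ppa K N (j + 1) * ppa K N j)
    {w : ParticAlgebra K N} (hw : w ∈ lowerSubmonoid K N (j + 1)) :
    ppa K N (j + 1) * w * ppa K N j = w * ppa K N (j + 1) * ppa K N j := by
  induction hw using Submonoid.closure_induction_left with
  | one => simp
  | mul_left g hg w hw ih =>
    obtain ⟨t, ⟨ht1, ht⟩, rfl⟩ := hg
    rcases Nat.lt_or_ge t j with htj | htj
    · have hc : Commute (ppa K N t) (ppa K N (j + 1)) := commute_ppa_of_add_two_le (by omega)
      calc ppa K N (j + 1) * (ppa K N t * w) * ppa K N j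
          = ppa K N t * (ppa K N (j + 1) * w * ppa K N j) := by
            rw [← mul_assoc, ← hc.eq]; simp only [mul_assoc]
        _ = ppa K N t * w * ppa K N (j + 1) * ppa K N j := by rw [ih]; simp only [mul_assoc]
    · obtain rfl : t = j := by omega
      simpa only [mul_assoc] using ppa_succ_mul_ppa_mul_mul_ppa_of_forall hP hw

theorem ppa_add_two_mul_ppa_succ_mul_mul_ppa_succ_of_forall {j : ℕ} (hjN : j + 2 ≤ N - 1)
    (hL : ∀ w ∈ lowerSubmonoid K N (j + 1),
      ppa K N (j + 1) * w * ppa K N j = w * ppa K N (j + 1) * ppa K N j)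
    {q : ParticAlgebra K N} (hq : q ∈ lowerSubmonoid K N (j + 1)) :
    ppa K N (j + 2) * ppa K N (j + 1) * q * ppa K N (j + 1) =
      ppa K N (j + 1) * q * ppa K N (j + 2) * ppa K N (j + 1) := by
  induction hq using Submonoid.closure_induction_right with
  | one => simpa using (ppa_mul_ppa_succ_mul_ppa (j := j + 1) (by omega) hjN).symm
  | mul_right q hq g hg ih =>
    obtain ⟨t, ⟨ht1, ht⟩, rfl⟩ := hg
    rcases Nat.lt_or_ge t j with htj | htj
    · have hx : Commute (ppa K N t) (ppa K N (j + 2)) := commute_ppa_of_add_two_le (by omega)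
      have hy : Commute (ppa K N t) (ppa K N (j + 1)) := commute_ppa_of_add_two_le (by omega)
      calc ppa K N (j + 2) * ppa K N (j + 1) * (q * ppa K N t) * ppa K N (j + 1)
          = ppa K N (j + 2) * ppa K N (j + 1) * q * ppa K N (j + 1) * ppa K N t := by
            simp only [mul_assoc, hy.eq]
        _ = ppa K N (j + 1) * q * ppa K N (j + 2) * ppa K N (j + 1) * ppa K N t := by rw [ih]
        _ = ppa K N (j + 1) * (q * ppa K N t) * ppa K N (j + 2) * ppa K N (j + 1) := by
            simp only [mul_assoc, hx.left_comm, hy.eq]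
    · obtain rfl : t = j := by omega
      have hx : Commute (ppa K N (t + 2)) q := commute_ppa_of_mem_lowerSubmonoid (by omega) hq
      calc ppa K N (t + 2) * ppa K N (t + 1) * (q * ppa K N t) * ppa K N (t + 1)
          = ppa K N (t + 2) * (ppa K N (t + 1) * q * ppa K N t) * ppa K N (t + 1) := by
            simp only [mul_assoc]
        _ = q * (ppa K N (t + 2) * ppa K N (t + 1) * ppa K N t * ppa K N (t + 1)) := by
            rw [hL q hq]; simp only [mul_assoc, hx.left_comm]
        _ = q * ppa K N (t + 1) * ppa K N t * ppa K N (t + 2) * ppa K N (t + 1) := by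
            rw [← ppa_succ_mul_ppa_mul_ppa_add_two_mul_ppa_succ ht1 hjN]; simp only [mul_assoc]
        _ = ppa K N (t + 1) * (q * ppa K N t) * ppa K N (t + 2) * ppa K N (t + 1) := by
            rw [← hL q hq]; simp only [mul_assoc]

theorem ppa_succ_mul_ppa_mul_mul_ppa {j : ℕ} (hj : 1 ≤ j) (hjN : j + 1 ≤ N - 1)
    {q : ParticAlgebra K N} (hq : q ∈ lowerSubmonoid K N j) :
    ppa K N (j + 1) * ppa K N j * q * ppa K N j = ppa K N j * q * ppa K N (j + 1) * ppa K N j := by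
  induction j, hj using Nat.le_induction generalizing q with
  | base =>
    rw [lowerSubmonoid_one, Submonoid.mem_bot] at hq
    simpa [hq] using (ppa_mul_ppa_succ_mul_ppa le_rfl hjN).symm
  | succ j _ ih =>
    exact ppa_add_two_mul_ppa_succ_mul_mul_ppa_succ_of_forall hjN
      (fun w hw => ppa_succ_mul_mul_ppa_of_forall (fun q hq => ih (by omega) hq) hw) hq

theorem ppa_mul_ppa_succ_mul_mul_ppa {i : ℕ} (hi : 1 ≤ i) (hiN : i + 1 ≤ N - 1)
    {w : ParticAlgebra K N} (hw : w ∈ lowerSubmonoid K N i) :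
    ppa K N i * ppa K N (i + 1) * w * ppa K N i = ppa K N (i + 1) * ppa K N i * w * ppa K N i := by
  rw [ppa_succ_mul_ppa_mul_mul_ppa hi hiN hw, mul_assoc (ppa K N i),
    (commute_ppa_of_mem_lowerSubmonoid le_rfl hw).eq, ← mul_assoc]

variable (K N) in
noncomputable def powProd (d : ℕ → ℕ) (l : List ℕ) : ParticAlgebra K N :=
  (l.map fun t => ppa K N t ^ d t).prod

variable (K N) in
noncomputable def nfMonBelow (d e : ℕ → ℕ) (i : ℕ) : ParticAlgebra K N :=
  powProd K N d (List.range' 2 (i - 2)).reverse * powProd K N e (List.range' 1 (i - 1))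

@[simp] theorem powProd_nil (d : ℕ → ℕ) : powProd K N d [] = 1 := rfl

@[simp] theorem powProd_cons (d : ℕ → ℕ) (t : ℕ) (l : List ℕ) :
    powProd K N d (t :: l) = ppa K N t ^ d t * powProd K N d l := by
  simp [powProd]

@[simp] theorem powProd_append (d : ℕ → ℕ) (l₁ l₂ : List ℕ) :
    powProd K N d (l₁ ++ l₂) = powProd K N d l₁ * powProd K N d l₂ := by
  simp [powProd]

theorem powProd_update_of_notMem {d : ℕ → ℕ} {i : ℕ} {l : List ℕ} (hi : i ∉ l) (a : ℕ) :
    powProd K N (Function.update d i a) l = powProd K N d l := by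
  refine congrArg List.prod (List.map_congr_left fun t ht => ?_)
  rw [Function.update_of_ne (ne_of_mem_of_not_mem ht hi)]

theorem powProd_mem_lowerSubmonoid {d : ℕ → ℕ} {l : List ℕ} {j : ℕ}
    (hl : ∀ t ∈ l, 1 ≤ t ∧ t < j) : powProd K N d l ∈ lowerSubmonoid K N j := by
  refine Submonoid.list_prod_mem _ fun g hg => ?_
  obtain ⟨t, ht, rfl⟩ := List.mem_map.1 hg
  exact pow_mem (ppa_mem_lowerSubmonoid (hl t ht).1 (hl t ht).2) _

theorem commute_ppa_powProd {d : ℕ → ℕ} {l : List ℕ} {i : ℕ} (hl : ∀ t ∈ l, i + 2 ≤ t) :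
    Commute (ppa K N i) (powProd K N d l) := by
  refine Commute.list_prod_right _ _ fun g hg => ?_
  obtain ⟨t, ht, rfl⟩ := List.mem_map.1 hg
  exact (commute_ppa_of_add_two_le (hl t ht)).pow_right _

theorem nfMon_eq_powProd (d e : ℕ → ℕ) :
    nfMon K N d e =
      powProd K N d (List.range' 2 (N - 2)).reverse * powProd K N e (List.range' 1 (N - 1)) := by
  rw [nfMon, powProd, powProd, List.reverse_range', List.range'_eq_map_range, List.map_map,
    List.map_map]
  congr 2 <;> refine List.map_congr_left fun t ht => ?_ <;> rw [List.mem_range] at ht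
  · simp only [Function.comp_apply, show 2 + (N - 2) - 1 - t = N - 1 - t by omega]
  · simp only [Function.comp_apply, add_comm 1 t]

theorem nfMon_update_update {i : ℕ} (h2 : 2 ≤ i) (hi : i ≤ N - 1) (d e : ℕ → ℕ) (a b : ℕ) :
    nfMon K N (Function.update d i a) (Function.update e i b) =
      powProd K N d (List.range' (i + 1) (N - 1 - i)).reverse * ppa K N i ^ a *
        nfMonBelow K N d e i * ppa K N i ^ b * powProd K N e (List.range' (i + 1) (N - 1 - i)) := by
  have hlow : List.range' 2 (N - 2) =
      List.range' 2 (i - 2) ++ i :: List.range' (i + 1) (N - 1 - i) := by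
    rw [range'_eq_append_cons h2 (by omega)]; congr 3; omega
  have hup : List.range' 1 (N - 1) =
      List.range' 1 (i - 1) ++ i :: List.range' (i + 1) (N - 1 - i) := by
    rw [range'_eq_append_cons (i := i) (by omega) (by omega)]; congr 3; omega
  rw [nfMon_eq_powProd, nfMonBelow, hlow, hup]
  simp only [List.reverse_append, List.reverse_cons, List.append_assoc, List.singleton_append,
    powProd_append, powProd_cons, Function.update_self]
  rw [powProd_update_of_notMem (l := (List.range' (i + 1) (N - 1 - i)).reverse) (by simp),
    powProd_update_of_notMem (l := (List.range' 2 (i - 2)).reverse) (by simp; omega),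
    powProd_update_of_notMem (l := List.range' 1 (i - 1)) (by simp; omega),
    powProd_update_of_notMem (l := List.range' (i + 1) (N - 1 - i)) (by simp)]
  simp only [mul_assoc]

theorem nfMonBelow_mem_lowerSubmonoid (d e : ℕ → ℕ) (i : ℕ) :
    nfMonBelow K N d e i ∈ lowerSubmonoid K N i :=
  mul_mem (powProd_mem_lowerSubmonoid fun t ht => by simp at ht; omega)
    (powProd_mem_lowerSubmonoid fun t ht => by simp at ht; omega)

theorem exists_nfMonBelow_eq {d : ℕ → ℕ} (e : ℕ → ℕ) {i : ℕ} (h2 : 2 ≤ i) (hd1 : d 1 = 0) :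
    ∃ m, Commute (ppa K N i) m ∧
      nfMonBelow K N d e i = ppa K N (i - 1) ^ d (i - 1) * m * ppa K N (i - 1) ^ e (i - 1) := by
  obtain rfl | ⟨k, rfl⟩ : i = 2 ∨ ∃ k, i = k + 3 := by rcases i with _ | _ | _ | k <;> simp_all
  · exact ⟨1, Commute.one_right _, by simp [nfMonBelow, hd1]⟩
  · refine ⟨nfMonBelow K N d e (k + 2),
      commute_ppa_of_mem_lowerSubmonoid le_rfl (nfMonBelow_mem_lowerSubmonoid d e _), ?_⟩
    rw [nfMonBelow, nfMonBelow, show k + 3 - 2 = k + 1 by omega,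
      show k + 3 - 1 = k + 1 + 1 by omega, List.range'_1_concat, List.range'_1_concat (n := k + 1)]
    simp [show 2 + k = k + 2 by omega, show 1 + (k + 1) = k + 2 by omega, mul_assoc]

def IsNormal (N : ℕ) (d e : ℕ → ℕ) : Prop :=
  ∀ j, 2 ≤ j → j ≤ N - 1 → d j ≤ d (j - 1) + e (j - 1)

theorem IsNormal.update_right {N : ℕ} {d e : ℕ → ℕ} (h : IsNormal N d e) (i : ℕ) :
    IsNormal N d (Function.update e i (e i + 1)) := by
  intro j hj hjN
  have := h j hj hjN
  rw [Function.update_apply]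
  split_ifs <;> subst_vars <;> omega

theorem IsNormal.update_left {N : ℕ} {d e : ℕ → ℕ} (h : IsNormal N d e) {i : ℕ}
    (hlt : d i < d (i - 1) + e (i - 1)) : IsNormal N (Function.update d i (d i + 1)) e := by
  intro j hj hjN
  have := h j hj hjN
  simp only [Function.update_apply]
  split_ifs <;> subst_vars <;> omega

theorem ppa_mul_powProd_mul_pow_mul_mul_pow {d : ℕ → ℕ} {i a b : ℕ} (h1 : 1 ≤ i)
    (hi : i ≤ N - 1) (hp : i + 1 ≤ N - 1 → d (i + 1) ≤ a + b) {w : ParticAlgebra K N}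
    (hw : w ∈ lowerSubmonoid K N i) :
    ppa K N i * (powProd K N d (List.range' (i + 1) (N - 1 - i)).reverse * ppa K N i ^ a * w *
        ppa K N i ^ b) =
      powProd K N d (List.range' (i + 1) (N - 1 - i)).reverse * ppa K N i ^ (a + 1) * w *
        ppa K N i ^ b := by
  rcases Nat.lt_or_ge i (N - 1) with hiN | hiN
  · obtain ⟨k, hk⟩ : ∃ k, N - 1 - i = k + 1 := ⟨N - 2 - i, by omega⟩
    have hH : Commute (ppa K N i) (powProd K N d (List.range' (i + 1 + 1) k).reverse) :=
      commute_ppa_powProd fun t ht => by simp at ht; omega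
    rw [hk, List.range'_succ, List.reverse_cons, powProd_append]
    simp only [powProd_cons, powProd_nil, mul_one]
    calc ppa K N i * (powProd K N d (List.range' (i + 1 + 1) k).reverse *
          ppa K N (i + 1) ^ d (i + 1) * ppa K N i ^ a * w * ppa K N i ^ b)
        = powProd K N d (List.range' (i + 1 + 1) k).reverse *
            (ppa K N i * ppa K N (i + 1) ^ d (i + 1) * ppa K N i ^ a * w * ppa K N i ^ b) := by
          simp only [← mul_assoc, hH.eq]
      _ = _ := by
          rw [mul_pow_mul_pow_mul_mul_pow (ppa_mul_ppa_succ_mul_ppa h1 hiN)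
            (commute_ppa_of_mem_lowerSubmonoid le_rfl hw) (ppa_mul_ppa_succ_mul_mul_ppa h1 hiN hw)
            (hp hiN)]
          simp only [mul_assoc]
  · rw [show N - 1 - i = 0 by omega]
    simp only [List.range'_zero, List.reverse_nil, powProd_nil, one_mul, pow_succ', mul_assoc]

theorem ppa_mul_nfMon {d e : ℕ → ℕ} {i : ℕ} (h2 : 2 ≤ i) (hi : i ≤ N - 1)
    (hnf : IsNormal N d e) :
    ppa K N i * nfMon K N d e = nfMon K N (Function.update d i (d i + 1)) e := by
  conv_lhs => rw [← Function.update_eq_self i d, ← Function.update_eq_self i e,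
    nfMon_update_update h2 hi]
  conv_rhs => rw [← Function.update_eq_self i e, nfMon_update_update h2 hi]
  rw [← mul_assoc, ppa_mul_powProd_mul_pow_mul_mul_pow (by omega) hi
    (fun hiN => by simpa using hnf (i + 1) (by omega) hiN) (nfMonBelow_mem_lowerSubmonoid d e i)]

theorem ppa_pow_succ_mul_nfMonBelow {d e : ℕ → ℕ} {i : ℕ} (h2 : 2 ≤ i) (hi : i ≤ N - 1)
    (hd1 : d 1 = 0) (heq : d i = d (i - 1) + e (i - 1)) :
    ppa K N i ^ (d i + 1) * nfMonBelow K N d e i =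
      ppa K N i ^ d i * nfMonBelow K N d e i * ppa K N i := by
  obtain ⟨m, hm, hW⟩ := exists_nfMonBelow_eq (K := K) (N := N) e h2 hd1
  have hxyx := ppa_succ_mul_ppa_mul_ppa_succ (K := K) (N := N) (j := i - 1) (by omega) (by omega)
  have hyxy := ppa_mul_ppa_succ_mul_ppa (K := K) (N := N) (j := i - 1) (by omega) (by omega)
  rw [Nat.sub_add_cancel (by omega)] at hxyx hyxy
  simpa only [hW, heq, mul_assoc] using
    pow_add_succ_mul_pow_mul_mul_pow hxyx hyxy hm (d (i - 1)) (e (i - 1))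

theorem nfMon_update_left_eq_update_right {d e : ℕ → ℕ} {i : ℕ} (h2 : 2 ≤ i) (hi : i ≤ N - 1)
    (hd1 : d 1 = 0) (heq : d i = d (i - 1) + e (i - 1)) :
    nfMon K N (Function.update d i (d i + 1)) e = nfMon K N d (Function.update e i (e i + 1)) := by
  conv_lhs => rw [← Function.update_eq_self i e, nfMon_update_update h2 hi]
  conv_rhs => rw [← Function.update_eq_self i d, nfMon_update_update h2 hi]
  rw [mul_assoc _ (ppa K N i ^ (d i + 1)), ppa_pow_succ_mul_nfMonBelow h2 hi hd1 heq, pow_succ']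
  simp only [mul_assoc]

end Partic

theorem stmt10_general (K : Type*) [Field K] (N : ℕ) (d e : ℕ → ℕ) (hd1 : d 1 = 0)
    (hnf : ∀ j, 2 ≤ j → j ≤ N - 1 → d j ≤ d (j - 1) + e (j - 1))
    (i : ℕ) (h1 : 2 ≤ i) (h2 : i ≤ N - 1) :
    (d i = d (i - 1) + e (i - 1) →
      ppa K N i * nfMon K N d e = nfMon K N d (Function.update e i (e i + 1)) ∧
      (∀ j, 2 ≤ j → j ≤ N - 1 →
        d j ≤ d (j - 1) + Function.update e i (e i + 1) (j - 1))) ∧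
    (d i < d (i - 1) + e (i - 1) →
      ppa K N i * nfMon K N d e =
          nfMon K N (Function.update d i (d i + 1)) e ∧
      (∀ j, 2 ≤ j → j ≤ N - 1 →
        Function.update d i (d i + 1) j ≤
          Function.update d i (d i + 1) (j - 1) + e (j - 1))) := by
  refine ⟨fun heq => ⟨?_, IsNormal.update_right hnf i⟩,
    fun hlt => ⟨ppa_mul_nfMon h1 h2 hnf, IsNormal.update_left hnf hlt⟩⟩
  rw [ppa_mul_nfMon h1 h2 hnf, nfMon_update_left_eq_update_right h1 h2 hd1 heq]

/-- Left multiplication of a generator `a_i` against a normal-form monomial: if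
`d_i = d_{i-1} + k_{i-1}` (convention `d_1 = 0`) then `k_i` increases by one, and if
`d_i < d_{i-1} + k_{i-1}` then `d_i` increases by one; in both cases the result again
satisfies the normal-form inequalities. -/
theorem stmt10 (K : Type*) [Field K] (N : ℕ) (hN : 3 ≤ N) (d e : ℕ → ℕ) (hd1 : d 1 = 0)
    (hnf : ∀ j, 2 ≤ j → j ≤ N - 1 → d j ≤ d (j - 1) + e (j - 1))
    (i : ℕ) (h1 : 2 ≤ i) (h2 : i ≤ N - 1) :
    (d i = d (i - 1) + e (i - 1) →
      ppa K N i * nfMon K N d e = nfMon K N d (Function.update e i (e i + 1)) ∧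
      (∀ j, 2 ≤ j → j ≤ N - 1 →
        d j ≤ d (j - 1) + Function.update e i (e i + 1) (j - 1))) ∧
    (d i < d (i - 1) + e (i - 1) →
      ppa K N i * nfMon K N d e =
          nfMon K N (Function.update d i (d i + 1)) e ∧
      (∀ j, 2 ≤ j → j ≤ N - 1 →
        Function.update d i (d i + 1) j ≤
          Function.update d i (d i + 1) (j - 1) + e (j - 1))) :=
  stmt10_general K N d e hd1 hnf i h1 h2
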